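/- arXiv:1005.5575 — 2 statements merged into one kernel-verified Lean document; each statement's English description precedes it below -/
import Mathlib

section
/- For any essentially bounded measurable f on X, the essential supremum over the set C of (𝓜, μ)-uniform N-tuples of |(1/N)·∑_{n=1}^N f(x_n) − ∫_X f dμ| is at most S_𝓜(f) = max_{1≤j≤k}(G_j(f) − g_j(f)). -/
/-! On each cell `M j` a bounded `f` lies a.e. between `gj` and `Gj`, and almost every tuple drawn
from `μ^N` has all its points in that good set. A uniform tuple visits `M j` exactly `μ(M j) N`
times, so its empirical average lies in `[∑ gj μ(M j), ∑ Gj μ(M j)]`; so does `∫ f dμ`, split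
over the cells. Two points of that interval differ by at most `∑ (Gj - gj) μ(M j)`, a convex
combination of the spreads. -/

open MeasureTheory
open Filter Set Function

/-- `Gj μ f M` is the essential upper bound `G_j(f)` of `f` on `M`:
`-inf_{x∈M} f⁻` if `f⁺ = 0` μ-a.e. on `M`, and `esssup_{M} f⁺` otherwise. -/
noncomputable def Gj {X : Type*} [MeasurableSpace X] (μ : Measure X)
    (f : X → ℝ) (M : Set X) : ℝ :=
  if μ {x | x ∈ M ∧ 0 < max (f x) 0} = 0 then
    -(sInf ((fun x => max (-(f x)) 0) '' M))
  else essSup (fun x => max (f x) 0) (μ.restrict M)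

/-- `gj μ f M` is the essential lower bound `g_j(f)` of `f` on `M`:
`inf_{x∈M} f⁺` if `f⁻ = 0` μ-a.e. on `M`, and `-esssup_{M} f⁻` otherwise. -/
noncomputable def gj {X : Type*} [MeasurableSpace X] (μ : Measure X)
    (f : X → ℝ) (M : Set X) : ℝ :=
  if μ {x | x ∈ M ∧ 0 < max (-(f x)) 0} = 0 then
    sInf ((fun x => max (f x) 0) '' M)
  else -(essSup (fun x => max (-(f x)) 0) (μ.restrict M))

section EssentialBounds

variable {X : Type*} [MeasurableSpace X] {μ : Measure X} {f : X → ℝ} {M : Set X}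

lemma ae_le_Gj (hM : MeasurableSet M) {B : ℝ} (hf : ∀ᵐ x ∂μ, f x ≤ B) :
    ∀ᵐ x ∂μ, x ∈ M → f x ≤ Gj μ f M := by
  unfold Gj
  split_ifs with hpos
  · filter_upwards [measure_eq_zero_iff_ae_notMem.mp hpos] with x hx hxM
    have hfx : f x ≤ 0 := by simpa [hxM] using hx
    have hinf : sInf ((fun x => max (-(f x)) 0) '' M) ≤ max (-(f x)) 0 :=
      csInf_le ⟨0, by rintro _ ⟨_, -, rfl⟩; exact le_max_right _ _⟩ (mem_image_of_mem _ hxM)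
    rw [max_eq_left (by linarith)] at hinf
    linarith
  · rw [← ae_restrict_iff' hM]
    have hbdd : IsBoundedUnder (· ≤ ·) (ae (μ.restrict M)) fun x => max (f x) 0 :=
      ⟨max B 0, eventually_map.mpr <| by
        filter_upwards [ae_restrict_of_ae hf] with x hx using max_le_max_right 0 hx⟩
    filter_upwards [ae_le_essSup hbdd] with x hx
    exact (le_max_left _ _).trans hx

lemma gj_eq_neg_Gj_neg : gj μ f M = -Gj μ (fun x => -f x) M := by
  unfold Gj gj
  simp only [neg_neg]
  split_ifs <;> simp

lemma ae_gj_le (hM : MeasurableSet M) {B : ℝ} (hf : ∀ᵐ x ∂μ, B ≤ f x) :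
    ∀ᵐ x ∂μ, x ∈ M → gj μ f M ≤ f x := by
  have hneg := ae_le_Gj (f := fun x => -f x) hM (B := -B) (by simpa using hf)
  filter_upwards [hneg] with x hx hxM
  rw [gj_eq_neg_Gj_neg]
  linarith [hx hxM]

end EssentialBounds

section Partition

variable {X ι : Type*} [Fintype ι] {M : ι → Set X}

lemma sum_indicator_eq_of_partition {β : Type*} [AddCommMonoid β]
    (hdisj : Pairwise (Disjoint on M)) (hcover : ⋃ j, M j = univ) (g : X → β) (y : X) :
    ∑ j, (M j).indicator g y = g y := by
  rw [← Finset.indicator_biUnion_apply _ _ (hdisj.set_pairwise _)]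
  simp [hcover]

lemma sum_le_sum_mul_count_of_partition {κ : Type*} [Fintype κ]
    (hdisj : Pairwise (Disjoint on M)) (hcover : ⋃ j, M j = univ) (x : κ → X) {f : X → ℝ}
    {c : ι → ℝ} (h : ∀ n j, x n ∈ M j → f (x n) ≤ c j) :
    ∑ n, f (x n) ≤ ∑ j, c j * ∑ n, (M j).indicator (fun _ => (1 : ℝ)) (x n) :=
  calc ∑ n, f (x n) = ∑ n, ∑ j, (M j).indicator f (x n) := by
        simp only [sum_indicator_eq_of_partition hdisj hcover]
    _ ≤ ∑ n, ∑ j, c j * (M j).indicator (fun _ => (1 : ℝ)) (x n) :=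
        Finset.sum_le_sum fun n _ => Finset.sum_le_sum fun j _ => by
          by_cases hxn : x n ∈ M j <;> simp [hxn, h n j]
    _ = ∑ j, c j * ∑ n, (M j).indicator (fun _ => (1 : ℝ)) (x n) := by
        rw [Finset.sum_comm]
        simp only [Finset.mul_sum]

lemma average_mem_Icc_of_count_eq (hdisj : Pairwise (Disjoint on M))
    (hcover : ⋃ j, M j = univ) {N : ℕ} (hN : 0 < N) (x : Fin N → X) {w : ι → ℝ}
    (hx : ∀ j, ∑ n, (M j).indicator (fun _ => (1 : ℝ)) (x n) = w j * N) {f : X → ℝ}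
    {a b : ι → ℝ} (h : ∀ n j, x n ∈ M j → f (x n) ∈ Icc (a j) (b j)) :
    1 / (N : ℝ) * ∑ n, f (x n) ∈ Icc (∑ j, a j * w j) (∑ j, b j * w j) := by
  have hsum_le : ∀ (g : X → ℝ) (c : ι → ℝ), (∀ n j, x n ∈ M j → g (x n) ≤ c j) →
      ∑ n, g (x n) ≤ (∑ j, c j * w j) * N := fun g c hgc => by
    simpa [hx, ← mul_assoc, Finset.sum_mul] using
      sum_le_sum_mul_count_of_partition hdisj hcover x hgc
  have hN' : (0 : ℝ) < N := by exact_mod_cast hN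
  rw [one_div, inv_mul_eq_div]
  constructor
  · have := hsum_le (fun y => -f y) (fun j => -a j) fun n j hn => neg_le_neg (h n j hn).1
    simp only [Finset.sum_neg_distrib, neg_mul, neg_le_neg_iff] at this
    rwa [le_div_iff₀ hN']
  · rw [div_le_iff₀ hN']
    exact hsum_le f b fun n j hn => (h n j hn).2

variable [MeasurableSpace X] {μ : Measure X} [IsFiniteMeasure μ]

lemma integral_le_sum_mul_measureReal_of_partition (hmeas : ∀ j, MeasurableSet (M j))
    (hdisj : Pairwise (Disjoint on M)) (hcover : ⋃ j, M j = univ) {f : X → ℝ}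
    (hf : Integrable f μ) {c : ι → ℝ} (h : ∀ j, ∀ᵐ x ∂μ, x ∈ M j → f x ≤ c j) :
    ∫ x, f x ∂μ ≤ ∑ j, c j * μ.real (M j) :=
  calc ∫ x, f x ∂μ = ∑ j, ∫ x in M j, f x ∂μ := by
        rw [← integral_iUnion_fintype hmeas hdisj fun j => hf.integrableOn, hcover,
          setIntegral_univ]
    _ ≤ ∑ j, ∫ _ in M j, c j ∂μ := Finset.sum_le_sum fun j _ =>
        setIntegral_mono_ae_restrict hf.integrableOn integrableOn_const
          ((ae_restrict_iff' (hmeas j)).2 (h j))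
    _ = ∑ j, c j * μ.real (M j) := by simp [mul_comm]

lemma integral_mem_Icc_of_partition (hmeas : ∀ j, MeasurableSet (M j))
    (hdisj : Pairwise (Disjoint on M)) (hcover : ⋃ j, M j = univ) {f : X → ℝ}
    (hf : Integrable f μ) {a b : ι → ℝ} (h : ∀ j, ∀ᵐ x ∂μ, x ∈ M j → f x ∈ Icc (a j) (b j)) :
    ∫ x, f x ∂μ ∈ Icc (∑ j, a j * μ.real (M j)) (∑ j, b j * μ.real (M j)) := by
  constructor
  · have := integral_le_sum_mul_measureReal_of_partition hmeas hdisj hcover hf.neg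
      (c := fun j => -a j) fun j => (h j).mono fun x hx hxM => neg_le_neg (hx hxM).1
    simpa [integral_neg, Finset.sum_neg_distrib] using this
  · exact integral_le_sum_mul_measureReal_of_partition hmeas hdisj hcover hf
      fun j => (h j).mono fun x hx hxM => (hx hxM).2

end Partition

lemma sum_mul_le_ciSup {ι : Type*} [Fintype ι] (a w : ι → ℝ) (hw0 : ∀ j, 0 ≤ w j)
    (hw1 : ∑ j, w j = 1) : ∑ j, a j * w j ≤ ⨆ j, a j :=
  calc ∑ j, a j * w j ≤ ∑ j, (⨆ i, a i) * w j := Finset.sum_le_sum fun j _ =>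
        mul_le_mul_of_nonneg_right (le_ciSup (Finite.bddAbove_range a) j) (hw0 j)
    _ = ⨆ i, a i := by rw [← Finset.mul_sum, hw1, mul_one]

theorem quasiMonteCarlo_error_le_spread_general
    {X : Type*} [MeasurableSpace X] (μ : Measure X) [IsProbabilityMeasure μ]
    (k : ℕ) (M : Fin k → Set X)
    (hMmeas : ∀ j, MeasurableSet (M j))
    (hMdisj : Pairwise (Function.onFun Disjoint M))
    (hMcover : ⋃ j, M j = Set.univ)
    (N : ℕ) (hN : 0 < N)
    (C : Set (Fin N → X))
    (hC : C = {x : Fin N → X | ∀ j : Fin k,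
      ∑ n : Fin N, Set.indicator (M j) (fun _ => (1 : ℝ)) (x n) = (μ (M j)).toReal * N})
    (f : X → ℝ) (hf : MemLp f ⊤ μ) :
    ∀ᵐ x ∂((Measure.pi (fun _ : Fin N => μ)).restrict C),
      |(1 / (N : ℝ)) * ∑ n : Fin N, f (x n) - ∫ t, f t ∂μ|
        ≤ ⨆ j : Fin k, (Gj μ f (M j) - gj μ f (M j)) := by
  have hbounds : ∀ j, ∀ᵐ y ∂μ, y ∈ M j → f y ∈ Icc (gj μ f (M j)) (Gj μ f (M j)) := fun j => by
    have hB := ae_le_lpNorm_exponent_top hf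
    filter_upwards [ae_gj_le (hMmeas j) (hB.mono fun y hy => (abs_le.mp hy).1),
      ae_le_Gj (hMmeas j) (hB.mono fun y hy => (abs_le.mp hy).2)] with y hg hG hy
    exact ⟨hg hy, hG hy⟩
  have hcoords : ∀ᵐ x ∂Measure.pi (fun _ : Fin N => μ),
      ∀ n j, x n ∈ M j → f (x n) ∈ Icc (gj μ f (M j)) (Gj μ f (M j)) := by
    simp only [ae_all_iff]
    exact fun n j => (Measure.quasiMeasurePreserving_eval (fun _ => μ) n).ae (hbounds j)
  have hCmeas : MeasurableSet C := by
    rw [hC]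
    measurability
  have hw1 : ∑ j, μ.real (M j) = 1 := by
    rw [← measureReal_iUnion_fintype hMdisj hMmeas, hMcover, probReal_univ]
  have hint := integral_mem_Icc_of_partition hMmeas hMdisj hMcover (hf.integrable le_top) hbounds
  filter_upwards [ae_restrict_mem hCmeas, ae_restrict_of_ae hcoords] with x hxC hx
  rw [hC] at hxC
  rw [← Real.dist_eq]
  calc _ ≤ ∑ j, Gj μ f (M j) * μ.real (M j) - ∑ j, gj μ f (M j) * μ.real (M j) :=
        Real.dist_le_of_mem_Icc (average_mem_Icc_of_count_eq hMdisj hMcover hN x hxC hx) hint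
    _ = ∑ j, (Gj μ f (M j) - gj μ f (M j)) * μ.real (M j) := by
        simp only [← Finset.sum_sub_distrib, sub_mul]
    _ ≤ _ := sum_mul_le_ciSup _ _ (fun _ => measureReal_nonneg) hw1

/-- Corollary 1 of the paper: For f ∈ L^∞, the essential supremum over the set
C of (𝓜, μ)-uniform tuples of the integration error is at most
S_𝓜(f) = max_j (G_j(f) − g_j(f)), stated as an a.e. bound. -/
theorem quasiMonteCarlo_error_le_spread
    {X : Type*} [MeasurableSpace X] (μ : Measure X) [IsProbabilityMeasure μ]
    (k : ℕ) (hk : 0 < k) (M : Fin k → Set X)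
    (hMmeas : ∀ j, MeasurableSet (M j))
    (hMdisj : Pairwise (Function.onFun Disjoint M))
    (hMcover : ⋃ j, M j = Set.univ)
    (N : ℕ) (hN : 0 < N)
    (C : Set (Fin N → X))
    (hC : C = {x : Fin N → X | ∀ j : Fin k,
      ∑ n : Fin N, Set.indicator (M j) (fun _ => (1 : ℝ)) (x n) = (μ (M j)).toReal * N})
    (f : X → ℝ) (hf : MemLp f ⊤ μ) :
    ∀ᵐ x ∂((Measure.pi (fun _ : Fin N => μ)).restrict C),
      |(1 / (N : ℝ)) * ∑ n : Fin N, f (x n) - ∫ t, f t ∂μ|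
        ≤ ⨆ j : Fin k, (Gj μ f (M j) - gj μ f (M j)) :=
  quasiMonteCarlo_error_le_spread_general μ k M hMmeas hMdisj hMcover N hN C hC f hf
end

section
/- Let f be essentially bounded measurable and M_j ∈ 𝒜. The set of (𝓜, μ)-uniform tuples (x_1,...,x_N) ∈ C for which μ(M_j)·g_j(f) > (1/N)·∑_{n : x_n ∈ M_j} f(x_n) is a null set with respect to the product measure μ^N; similarly for the set where μ(M_j)·G_j(f) < (1/N)·∑_{n : x_n ∈ M_j} f(x_n). -/
/-!
Off a null set of tuples, every coordinate `x n` lying in `M j` satisfies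
`g_j(f) ≤ f (x n) ≤ G_j(f)`, these being essential bounds of `f` on `M j`. Summing over those
coordinates, of which a uniform tuple has exactly `μ(M j) · N`, gives
`μ(M j) · g_j(f) ≤ (1/N) ∑ f (x n) ≤ μ(M j) · G_j(f)`. The upper bound is the lower one for `-f`,
since `G_j(f) = -g_j(-f)`.
-/

open MeasureTheory

open Filter

lemma Gj_eq_neg_gj_neg {X : Type*} [MeasurableSpace X] (μ : Measure X) (f : X → ℝ)
    (M : Set X) : Gj μ f M = -gj μ (-f) M := by
  simp only [Gj, gj, Pi.neg_apply, neg_neg]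
  split_ifs <;> simp

lemma MeasureTheory.MemLp.isBoundedUnder_abs_of_top {X : Type*} [MeasurableSpace X]
    {μ : Measure X} {f : X → ℝ} (hf : MemLp f ⊤ μ) :
    IsBoundedUnder (· ≤ ·) (ae μ) fun x => |f x| := by
  obtain ⟨c, hc⟩ := eLpNormEssSup_lt_top_iff_isBoundedUnder.mp
    (eLpNorm_exponent_top (f := f) (μ := μ) ▸ hf.eLpNorm_lt_top)
  refine isBoundedUnder_of_eventually_le (a := (c : ℝ)) ?_
  filter_upwards [hc] with x hx
  simpa [← Real.norm_eq_abs] using NNReal.coe_le_coe.mpr hx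

lemma ae_gj_le_s9 {X : Type*} [MeasurableSpace X] {μ : Measure X} {f : X → ℝ}
    (hf : IsBoundedUnder (· ≥ ·) (ae μ) f) (M : Set X) :
    ∀ᵐ x ∂μ, x ∈ M → gj μ f M ≤ f x := by
  unfold gj
  split_ifs with hneg
  · filter_upwards [measure_eq_zero_iff_ae_notMem.mp hneg] with x hx hxM
    have hfx : 0 ≤ f x := by
      by_contra! hfx
      exact hx ⟨hxM, lt_max_of_lt_left (neg_pos.mpr hfx)⟩
    calc sInf ((fun x => max (f x) 0) '' M) ≤ max (f x) 0 :=
          csInf_le ⟨0, by rintro _ ⟨y, -, rfl⟩; exact le_max_right _ _⟩ ⟨x, hxM, rfl⟩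
      _ = f x := max_eq_left hfx
  · obtain ⟨c, hc⟩ := hf
    have hbdd : IsBoundedUnder (· ≤ ·) (ae (μ.restrict M)) fun x => max (-f x) 0 :=
      isBoundedUnder_of_eventually_le (a := max (-c) 0)
        (ae_restrict_of_ae (hc.mono fun x hx => max_le_max (neg_le_neg hx) le_rfl))
    filter_upwards [ae_imp_of_ae_restrict (ae_le_essSup hbdd)] with x hx hxM
    linarith [le_max_left (-f x) 0, hx hxM]

lemma ae_le_Gj_s9 {X : Type*} [MeasurableSpace X] {μ : Measure X} {f : X → ℝ}
    (hf : IsBoundedUnder (· ≤ ·) (ae μ) f) (M : Set X) :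
    ∀ᵐ x ∂μ, x ∈ M → f x ≤ Gj μ f M := by
  have hf' : IsBoundedUnder (· ≥ ·) (ae μ) (-f) := isBoundedUnder_le_neg.mp (by simpa using hf)
  filter_upwards [ae_gj_le_s9 hf' M] with x hx hxM
  rw [Gj_eq_neg_gj_neg]
  linarith [hx hxM, Pi.neg_apply f x]

lemma ae_pi_mul_sum_indicator_one_le {X ι : Type*} [MeasurableSpace X] [Fintype ι]
    {μ : Measure X} [SigmaFinite μ] {M : Set X} {f : X → ℝ} {a : ℝ}
    (h : ∀ᵐ x ∂μ, x ∈ M → a ≤ f x) :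
    ∀ᵐ x ∂Measure.pi (fun _ : ι => μ),
      a * ∑ n, M.indicator (fun _ => (1 : ℝ)) (x n) ≤ ∑ n, M.indicator f (x n) := by
  have hall : ∀ᵐ x ∂Measure.pi (fun _ : ι => μ), ∀ n, x n ∈ M → a ≤ f (x n) :=
    ae_all_iff.2 fun n => (Measure.tendsto_eval_ae_ae (i := n) (μ := fun _ => μ)).eventually h
  filter_upwards [hall] with x hx
  rw [Finset.mul_sum]
  refine Finset.sum_le_sum fun n _ => ?_
  by_cases hn : x n ∈ M
  · simpa [Set.indicator_of_mem hn] using hx n hn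
  · simp [Set.indicator_of_notMem hn]

section UniformTuples

variable {X : Type*} [MeasurableSpace X] {μ : Measure X} [SigmaFinite μ] {N : ℕ}
  {M : Set X} {C : Set (Fin N → X)} {f : X → ℝ}

lemma measure_pi_mul_gt_partial_avg_eq_zero (hN : 0 < N)
    (hC : ∀ x ∈ C, ∑ n, M.indicator (fun _ => (1 : ℝ)) (x n) = (μ M).toReal * N)
    {a : ℝ} (h : ∀ᵐ x ∂μ, x ∈ M → a ≤ f x) :
    Measure.pi (fun _ : Fin N => μ)
      {x ∈ C | (μ M).toReal * a > (1 / (N : ℝ)) * ∑ n, M.indicator f (x n)} = 0 := by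
  rw [measure_eq_zero_iff_ae_notMem]
  filter_upwards [ae_pi_mul_sum_indicator_one_le h] with x hx ⟨hxC, hlt⟩
  rw [hC x hxC] at hx
  have hN' : (0 : ℝ) < N := by exact_mod_cast hN
  rw [gt_iff_lt, one_div, ← div_eq_inv_mul, div_lt_iff₀ hN'] at hlt
  linarith

lemma measure_pi_mul_lt_partial_avg_eq_zero (hN : 0 < N)
    (hC : ∀ x ∈ C, ∑ n, M.indicator (fun _ => (1 : ℝ)) (x n) = (μ M).toReal * N)
    {b : ℝ} (h : ∀ᵐ x ∂μ, x ∈ M → f x ≤ b) :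
    Measure.pi (fun _ : Fin N => μ)
      {x ∈ C | (μ M).toReal * b < (1 / (N : ℝ)) * ∑ n, M.indicator f (x n)} = 0 := by
  have hneg := measure_pi_mul_gt_partial_avg_eq_zero (f := -f) hN hC
    (h.mono fun x hx hxM => neg_le_neg (hx hxM))
  refine (congrArg _ (Set.ext fun x => and_congr_right fun _ => ?_)).trans hneg
  simp only [Set.indicator_neg', Pi.neg_apply, Finset.sum_neg_distrib]
  constructor <;> intro h <;> linarith

end UniformTuples

theorem partial_avg_outside_bounds_null_general
    {X : Type*} [MeasurableSpace X] (μ : Measure X) [IsProbabilityMeasure μ]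
    (k : ℕ) (M : Fin k → Set X)
    (N : ℕ) (hN : 0 < N)
    (C : Set (Fin N → X))
    (hC : C = {x : Fin N → X | ∀ j : Fin k,
      ∑ n : Fin N, Set.indicator (M j) (fun _ => (1 : ℝ)) (x n) = (μ (M j)).toReal * N})
    (f : X → ℝ) (hf : MemLp f ⊤ μ) (j : Fin k) :
    Measure.pi (fun _ : Fin N => μ)
      {x ∈ C | (μ (M j)).toReal * gj μ f (M j)
        > (1 / (N : ℝ)) * ∑ n : Fin N, Set.indicator (M j) f (x n)} = 0 ∧
    Measure.pi (fun _ : Fin N => μ)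
      {x ∈ C | (μ (M j)).toReal * Gj μ f (M j)
        < (1 / (N : ℝ)) * ∑ n : Fin N, Set.indicator (M j) f (x n)} = 0 := by
  have hCj : ∀ x ∈ C, ∑ n, (M j).indicator (fun _ => (1 : ℝ)) (x n) = (μ (M j)).toReal * N := by
    subst hC
    exact fun x hx => hx j
  obtain ⟨hf_le, hf_ge⟩ := isBoundedUnder_le_abs.mp hf.isBoundedUnder_abs_of_top
  exact ⟨measure_pi_mul_gt_partial_avg_eq_zero hN hCj (ae_gj_le_s9 hf_ge (M j)),
    measure_pi_mul_lt_partial_avg_eq_zero hN hCj (ae_le_Gj_s9 hf_le (M j))⟩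

/-- Within the set C of (𝓜, μ)-uniform tuples, the set where
μ(M_j)·g_j(f) exceeds the partial average over points in M_j is μ^N-null, and similarly
for the set where the partial average exceeds μ(M_j)·G_j(f). -/
theorem partial_avg_outside_bounds_null
    {X : Type*} [MeasurableSpace X] (μ : Measure X) [IsProbabilityMeasure μ]
    (k : ℕ) (hk : 0 < k) (M : Fin k → Set X)
    (hMmeas : ∀ j, MeasurableSet (M j))
    (hMdisj : Pairwise (Function.onFun Disjoint M))
    (hMcover : ⋃ j, M j = Set.univ)
    (N : ℕ) (hN : 0 < N)
    (C : Set (Fin N → X))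
    (hC : C = {x : Fin N → X | ∀ j : Fin k,
      ∑ n : Fin N, Set.indicator (M j) (fun _ => (1 : ℝ)) (x n) = (μ (M j)).toReal * N})
    (f : X → ℝ) (hf : MemLp f ⊤ μ) (j : Fin k) :
    Measure.pi (fun _ : Fin N => μ)
      {x ∈ C | (μ (M j)).toReal * gj μ f (M j)
        > (1 / (N : ℝ)) * ∑ n : Fin N, Set.indicator (M j) f (x n)} = 0 ∧
    Measure.pi (fun _ : Fin N => μ)
      {x ∈ C | (μ (M j)).toReal * Gj μ f (M j)
        < (1 / (N : ℝ)) * ∑ n : Fin N, Set.indicator (M j) f (x n)} = 0 :=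
  partial_avg_outside_bounds_null_general μ k M N hN C hC f hf j
end
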